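/- arXiv:2408.13127 — 4 statements merged into one kernel-verified Lean document; each statement's English description precedes it below -/
import Mathlib

section
/- For every n ≥ 6, the distributive lattice B_{3,n} is not nice: it admits a chain partition of type λ = (n+3, n+1, 2), but for any partition μ of 2n+6 with exactly 3 parts and largest part μ₁ = n (for example μ = (n,n,6)), which satisfies μ ⊴ λ in dominance order, there is no chain partition of B_{3,n} of type μ. -/
/-- The distributive lattice `B_{3,n}`, realized as a sublattice of the
product of chains `(n+1) × 2 × 2`: the boolean algebra `B₃` on top (the
elements with first coordinate `≥ n-1` and second coordinate `true`,
together with the top of the `u = false` part), with two parallel chains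
`1 > 2 > ... > n` and `1' > 2' > ... > n'` attached below. -/
abbrev B3nType (n : ℕ) :=
  {x : Fin (n + 1) × Bool × Bool // x.2.1 = true → n - 1 ≤ (x.1 : ℕ)}

def elA (n : ℕ) : B3nType n := ⟨(⟨n, Nat.lt_succ_self n⟩, true, true), fun _ => Nat.sub_le n 1⟩
def elD (n : ℕ) : B3nType n := ⟨(⟨n, Nat.lt_succ_self n⟩, true, false), fun _ => Nat.sub_le n 1⟩
def elB (n : ℕ) : B3nType n := ⟨(⟨n - 1, by omega⟩, true, true), fun _ => Nat.le_refl _⟩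
def elE (n : ℕ) : B3nType n := ⟨(⟨n - 1, by omega⟩, true, false), fun _ => Nat.le_refl _⟩
def elC (n : ℕ) : B3nType n := ⟨(⟨n, Nat.lt_succ_self n⟩, false, true), fun h => Bool.noConfusion h⟩
def elF (n : ℕ) : B3nType n := ⟨(⟨n, Nat.lt_succ_self n⟩, false, false), fun h => Bool.noConfusion h⟩
/-- The element `i+1` of the chain `1 > 2 > ... > n` (0-indexed `i`). -/
def elUnprimed (n : ℕ) (i : Fin n) : B3nType n :=
  ⟨(⟨n - 1 - (i : ℕ), by omega⟩, false, true), fun h => Bool.noConfusion h⟩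
/-- The element `(i+1)'` of the chain `1' > 2' > ... > n'` (0-indexed `i`). -/
def elPrimed (n : ℕ) (i : Fin n) : B3nType n :=
  ⟨(⟨n - 1 - (i : ℕ), by omega⟩, false, false), fun h => Bool.noConfusion h⟩

def IsPartitionM {V : Type*} [DecidableEq V] (B : Multiset (Finset V)) : Prop :=
  ∀ x : V, (B.map fun s => if x ∈ s then (1 : ℕ) else 0).sum = 1

/-- `P` has a chain partition whose multiset of block sizes is `μ`. -/
def HasChainPartitionOfType (V : Type*) [DecidableEq V] [PartialOrder V]
    (μ : Multiset ℕ) : Prop :=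
  ∃ B : Multiset (Finset V), IsPartitionM B ∧
    (∀ s ∈ B, ∀ x ∈ s, ∀ y ∈ s, x ≤ y ∨ y ≤ x) ∧ B.map Finset.card = μ

/-- Sum of the `j` largest entries of the multiset `μ`. -/
def topSum (μ : Multiset ℕ) (j : ℕ) : ℕ :=
  ((μ.powersetCard j).map Multiset.sum).sup

section B3Helpers

variable {n : ℕ}

lemma b3le (x y : B3nType n) :
    x ≤ y ↔ ((x.1.1:ℕ) ≤ y.1.1 ∧ x.1.2.1 ≤ y.1.2.1 ∧ x.1.2.2 ≤ y.1.2.2) := Iff.rfl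

lemma b3ext (x y : B3nType n) :
    x = y ↔ ((x.1.1:ℕ) = y.1.1 ∧ x.1.2.1 = y.1.2.1 ∧ x.1.2.2 = y.1.2.2) := by
  obtain ⟨⟨a,b,c⟩,hx⟩ := x; obtain ⟨⟨a',b',c'⟩,hy⟩ := y
  simp [Subtype.ext_iff, Prod.ext_iff, Fin.ext_iff]

lemma unp_inj : Function.Injective (elUnprimed n) := by
  intro i j h
  have hi := i.isLt; have hj := j.isLt
  rw [b3ext] at h
  simp only [elUnprimed] at h
  exact Fin.ext (by omega)

lemma pr_inj : Function.Injective (elPrimed n) := by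
  intro i j h
  have hi := i.isLt; have hj := j.isLt
  rw [b3ext] at h
  simp only [elPrimed] at h
  exact Fin.ext (by omega)

def USet (n : ℕ) : Finset (B3nType n) := Finset.image (elUnprimed n) Finset.univ
def PrSet (n : ℕ) : Finset (B3nType n) := Finset.image (elPrimed n) Finset.univ

lemma cardU : (USet n).card = n := by
  rw [USet, Finset.card_image_of_injective _ unp_inj]; simp

lemma cardP : (PrSet n).card = n := by
  rw [PrSet, Finset.card_image_of_injective _ pr_inj]; simp

lemma mem_U (x : B3nType n) :
    x ∈ USet n ↔ (x.1.2.1 = false ∧ x.1.2.2 = true ∧ (x.1.1:ℕ) < n) := by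
  constructor
  · intro hx
    rw [USet, Finset.mem_image] at hx
    obtain ⟨i, -, rfl⟩ := hx
    have := i.isLt
    simp [elUnprimed]
    omega
  · obtain ⟨⟨⟨m,hm⟩,u,v⟩,hx⟩ := x
    rintro ⟨rfl, rfl, hmn⟩
    replace hmn : m < n := hmn
    rw [USet, Finset.mem_image]
    refine ⟨⟨n - 1 - m, by omega⟩, Finset.mem_univ _, ?_⟩
    apply Subtype.ext
    simp [elUnprimed, Prod.ext_iff, Fin.ext_iff]
    omega

lemma mem_P (x : B3nType n) :
    x ∈ PrSet n ↔ (x.1.2.1 = false ∧ x.1.2.2 = false ∧ (x.1.1:ℕ) < n) := by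
  constructor
  · intro hx
    rw [PrSet, Finset.mem_image] at hx
    obtain ⟨i, -, rfl⟩ := hx
    have := i.isLt
    simp [elPrimed]
    omega
  · obtain ⟨⟨⟨m,hm⟩,u,v⟩,hx⟩ := x
    rintro ⟨rfl, rfl, hmn⟩
    replace hmn : m < n := hmn
    rw [PrSet, Finset.mem_image]
    refine ⟨⟨n - 1 - m, by omega⟩, Finset.mem_univ _, ?_⟩
    apply Subtype.ext
    simp [elPrimed, Prod.ext_iff, Fin.ext_iff]
    omega

-- incomparability lemmas
lemma inc_ef (hn : 1 ≤ n) : ¬(elE n ≤ elF n ∨ elF n ≤ elE n) := by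
  simp [b3le, elE, elF]; omega

lemma inc_ue (i : Fin n) : ¬(elUnprimed n i ≤ elE n ∨ elE n ≤ elUnprimed n i) := by
  simp [b3le, elUnprimed, elE]

lemma inc_uf (i : Fin n) : ¬(elUnprimed n i ≤ elF n ∨ elF n ≤ elUnprimed n i) := by
  have := i.isLt
  simp [b3le, elUnprimed, elF]; omega

lemma inc_ud (i : Fin n) : ¬(elUnprimed n i ≤ elD n ∨ elD n ≤ elUnprimed n i) := by
  simp [b3le, elUnprimed, elD]

lemma inc_bc (hn : 1 ≤ n) : ¬(elB n ≤ elC n ∨ elC n ≤ elB n) := by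
  simp [b3le, elB, elC]; omega

lemma inc_bd (hn : 1 ≤ n) : ¬(elB n ≤ elD n ∨ elD n ≤ elB n) := by
  simp [b3le, elB, elD]; omega

lemma inc_cd : ¬(elC n ≤ elD n ∨ elD n ≤ elC n) := by
  simp [b3le, elC, elD]

end B3Helpers

section B3Blocks

variable {n : ℕ}

def BS1 (n : ℕ) : Finset (B3nType n) :=
  insert (elA n) (insert (elB n) (insert (elE n) (PrSet n)))
def BS2 (n : ℕ) : Finset (B3nType n) := insert (elC n) (USet n)
def BS3 (n : ℕ) : Finset (B3nType n) := {elF n, elD n}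

lemma mem_BS1 (hn : 1 ≤ n) (x : B3nType n) :
    x ∈ BS1 n ↔ ((x.1.2.2 = false ∧ (x.1.1:ℕ) < n) ∨ (x.1.2.1 = true ∧ x.1.2.2 = true)) := by
  obtain ⟨⟨⟨m,hm⟩,u,v⟩,hx⟩ := x
  replace hx : u = true → n - 1 ≤ m := hx
  simp only [BS1, Finset.mem_insert, mem_P, b3ext, elA, elB, elE]
  cases u <;> cases v <;> simp_all [Bool.le_iff_imp] <;> (try simp_all) <;> omega

lemma mem_BS2 (x : B3nType n) :
    x ∈ BS2 n ↔ (x.1.2.1 = false ∧ x.1.2.2 = true) := by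
  obtain ⟨⟨⟨m,hm⟩,u,v⟩,hx⟩ := x
  simp only [BS2, Finset.mem_insert, mem_U, b3ext, elC]
  cases u <;> cases v <;> simp_all [Bool.le_iff_imp] <;> (try simp_all) <;> omega

lemma mem_BS3 (x : B3nType n) :
    x ∈ BS3 n ↔ (x.1.2.2 = false ∧ (x.1.1:ℕ) = n) := by
  obtain ⟨⟨⟨m,hm⟩,u,v⟩,hx⟩ := x
  replace hx : u = true → n - 1 ≤ m := hx
  simp only [BS3, Finset.mem_insert, Finset.mem_singleton, b3ext, elF, elD]
  cases u <;> cases v <;> simp_all [Bool.le_iff_imp]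

lemma chain_BS1 (hn : 1 ≤ n) : ∀ x ∈ BS1 n, ∀ y ∈ BS1 n, x ≤ y ∨ y ≤ x := by
  intro x hx y hy
  rw [mem_BS1 hn] at hx hy
  obtain ⟨⟨⟨mx,hmx⟩,ux,vx⟩,hcx⟩ := x
  obtain ⟨⟨⟨my,hmy⟩,uy,vy⟩,hcy⟩ := y
  replace hcx : ux = true → n - 1 ≤ mx := hcx
  replace hcy : uy = true → n - 1 ≤ my := hcy
  simp only [b3le]
  cases ux <;> cases uy <;> cases vx <;> cases vy <;> simp_all [Bool.le_iff_imp] <;> (try simp_all) <;> omega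

lemma chain_BS2 : ∀ x ∈ BS2 n, ∀ y ∈ BS2 n, x ≤ y ∨ y ≤ x := by
  intro x hx y hy
  rw [mem_BS2] at hx hy
  obtain ⟨⟨⟨mx,hmx⟩,ux,vx⟩,hcx⟩ := x
  obtain ⟨⟨⟨my,hmy⟩,uy,vy⟩,hcy⟩ := y
  simp only [b3le]
  cases ux <;> cases uy <;> cases vx <;> cases vy <;> simp_all [Bool.le_iff_imp] <;> (try simp_all) <;> omega

lemma chain_BS3 : ∀ x ∈ BS3 n, ∀ y ∈ BS3 n, x ≤ y ∨ y ≤ x := by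
  intro x hx y hy
  rw [mem_BS3] at hx hy
  obtain ⟨⟨⟨mx,hmx⟩,ux,vx⟩,hcx⟩ := x
  obtain ⟨⟨⟨my,hmy⟩,uy,vy⟩,hcy⟩ := y
  simp only [b3le]
  cases ux <;> cases uy <;> cases vx <;> cases vy <;> simp_all [Bool.le_iff_imp] <;> (try simp_all) <;> omega

lemma card_BS1 (hn : 1 ≤ n) : (BS1 n).card = n + 3 := by
  have h3 : elE n ∉ PrSet n := by simp [mem_P, elE]
  have h2 : elB n ∉ insert (elE n) (PrSet n) := by
    simp [Finset.mem_insert, mem_P, b3ext, elB, elE]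
  have h1 : elA n ∉ insert (elB n) (insert (elE n) (PrSet n)) := by
    simp [Finset.mem_insert, mem_P, b3ext, elA, elB, elE]
    omega
  rw [BS1, Finset.card_insert_of_notMem h1, Finset.card_insert_of_notMem h2,
    Finset.card_insert_of_notMem h3, cardP]

lemma card_BS2 : (BS2 n).card = n + 1 := by
  have h1 : elC n ∉ USet n := by simp [mem_U, elC]
  rw [BS2, Finset.card_insert_of_notMem h1, cardU]

lemma card_BS3 (hn : 1 ≤ n) : (BS3 n).card = 2 := by
  have h1 : elF n ≠ elD n := by simp [b3ext, elF, elD]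
  rw [BS3, Finset.card_insert_of_notMem (by simp [h1]), Finset.card_singleton]

lemma part_BS (hn : 1 ≤ n) : IsPartitionM ({BS1 n, BS2 n, BS3 n} : Multiset (Finset (B3nType n))) := by
  intro x
  simp only [Multiset.insert_eq_cons, Multiset.map_cons, Multiset.sum_cons,
    Multiset.map_singleton, Multiset.sum_singleton]
  simp only [mem_BS1 hn, mem_BS2, mem_BS3]
  obtain ⟨⟨⟨m,hm⟩,u,v⟩,hx⟩ := x
  replace hx : u = true → n - 1 ≤ m := hx
  cases u <;> cases v <;> simp_all <;> split_ifs <;> omega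

end B3Blocks

lemma b3key (n : ℕ) (hn : 6 ≤ n) (su se sf : Finset (B3nType n))
    (cov : ∀ x : B3nType n,
      (x ∈ su ∧ x ∉ se ∧ x ∉ sf) ∨ (x ∉ su ∧ x ∈ se ∧ x ∉ sf) ∨ (x ∉ su ∧ x ∉ se ∧ x ∈ sf))
    (chu : ∀ x ∈ su, ∀ y ∈ su, x ≤ y ∨ y ≤ x)
    (che : ∀ x ∈ se, ∀ y ∈ se, x ≤ y ∨ y ≤ x)
    (chf : ∀ x ∈ sf, ∀ y ∈ sf, x ≤ y ∨ y ≤ x)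
    (hcard : su.card ≤ n)
    (he : elE n ∈ se) (hf : elF n ∈ sf) : False := by
  have hu : ∀ i : Fin n, elUnprimed n i ∈ su := by
    intro i
    rcases cov (elUnprimed n i) with ⟨h,-,-⟩ | ⟨-,h,-⟩ | ⟨-,-,h⟩
    · exact h
    · exact absurd (che _ h _ he) (inc_ue i)
    · exact absurd (chf _ h _ hf) (inc_uf i)
  have hUsub : USet n ⊆ su := by
    intro x hx
    rw [USet, Finset.mem_image] at hx
    obtain ⟨i, -, rfl⟩ := hx
    exact hu i
  have hbig : ∀ z : B3nType n, z ∉ USet n → z ∈ su → False := by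
    intro z hz hzsu
    have hsub : insert z (USet n) ⊆ su := Finset.insert_subset hzsu hUsub
    have h2 : (insert z (USet n)).card = n + 1 := by
      rw [Finset.card_insert_of_notMem hz, cardU]
    have := Finset.card_le_card hsub
    omega
  have hb : elB n ∉ su := fun h => hbig _ (by simp [mem_U, elB]) h
  have hc : elC n ∉ su := fun h => hbig _ (by simp [mem_U, elC]) h
  have hd : elD n ∉ su := by
    intro h
    exact absurd (chu _ h _ (hu ⟨0, by omega⟩)) (by
      intro hor
      exact inc_ud (n := n) ⟨0, by omega⟩ hor.symm)
  rcases cov (elB n) with ⟨h,-,-⟩ | ⟨-,hbe,-⟩ | ⟨-,-,hbf⟩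
  · exact hb h
  · rcases cov (elC n) with ⟨h,-,-⟩ | ⟨-,hce,-⟩ | ⟨-,-,hcf⟩
    · exact hc h
    · exact absurd (che _ hbe _ hce) (inc_bc (by omega))
    · rcases cov (elD n) with ⟨h,-,-⟩ | ⟨-,hde,-⟩ | ⟨-,-,hdf⟩
      · exact hd h
      · exact absurd (che _ hbe _ hde) (inc_bd (by omega))
      · exact absurd (chf _ hcf _ hdf) inc_cd
  · rcases cov (elC n) with ⟨h,-,-⟩ | ⟨-,hce,-⟩ | ⟨-,-,hcf⟩
    · exact hc h
    · rcases cov (elD n) with ⟨h,-,-⟩ | ⟨-,hde,-⟩ | ⟨-,-,hdf⟩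
      · exact hd h
      · exact absurd (che _ hce _ hde) inc_cd
      · exact absurd (chf _ hbf _ hdf) (inc_bd (by omega))
    · exact absurd (chf _ hbf _ hcf) (inc_bc (by omega))


set_option maxHeartbeats 1600000 in
/-- For `n ≥ 6`, `B_{3,n}` is not nice: it has a chain
partition of type `λ = (n+3, n+1, 2)`, but for every partition `μ` of `2n+6`
with exactly 3 parts, all parts at most `n` and largest part equal to `n`,
one has `μ ⊴ λ` in dominance order and yet there is no chain partition of
`B_{3,n}` of type `μ`. -/

theorem stmt_1 (n : ℕ) (hn : 6 ≤ n) :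
    HasChainPartitionOfType (B3nType n) ({n + 3, n + 1, 2} : Multiset ℕ) ∧
    ∀ μ : Multiset ℕ, μ.card = 3 → μ.sum = 2 * n + 6 → (∀ x ∈ μ, 0 < x) →
      (∀ x ∈ μ, x ≤ n) → n ∈ μ →
      (∀ j, topSum μ j ≤ topSum ({n + 3, n + 1, 2} : Multiset ℕ) j) ∧
      ¬ HasChainPartitionOfType (B3nType n) μ := by
  have hn1 : 1 ≤ n := by omega
  constructor
  · refine ⟨{BS1 n, BS2 n, BS3 n}, part_BS hn1, ?_, ?_⟩
    · intro s hs
      simp only [Multiset.insert_eq_cons, Multiset.mem_cons, Multiset.mem_singleton] at hs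
      rcases hs with rfl | rfl | rfl
      · exact chain_BS1 hn1
      · exact chain_BS2
      · exact chain_BS3
    · simp only [Multiset.insert_eq_cons, Multiset.map_cons, Multiset.map_singleton]
      rw [card_BS1 hn1, card_BS2, card_BS3 hn1]
  · intro μ hμcard hμsum hμpos hμle hμn
    constructor
    · intro j
      rw [topSum, Multiset.sup_le]
      intro b hb
      rw [Multiset.mem_map] at hb
      obtain ⟨t, ht, rfl⟩ := hb
      rw [Multiset.mem_powersetCard] at ht
      obtain ⟨htle, htcard⟩ := ht
      have hsub : ∀ x ∈ t, x ≤ n := fun x hx => hμle x (Multiset.mem_of_le htle hx)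
      have hsum : t.sum ≤ j * n := by
        have h := Multiset.sum_le_card_nsmul t n hsub
        rwa [htcard, smul_eq_mul] at h
      have hj3 : j ≤ 3 := by
        have h1 := Multiset.card_le_card htle
        rw [htcard, hμcard] at h1; exact h1
      have wit : ∀ s : Multiset ℕ, s ≤ ({n+3,n+1,2} : Multiset ℕ) → s.card = j →
          s.sum ≤ topSum ({n+3,n+1,2} : Multiset ℕ) j := by
        intro s hs hcards
        exact Multiset.le_sup
          (Multiset.mem_map.mpr ⟨s, Multiset.mem_powersetCard.mpr ⟨hs, hcards⟩, rfl⟩)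
      interval_cases j
      · have h0 : t.sum = 0 := by omega
        rw [h0]; exact Nat.zero_le _
      · have hw := wit {n+3} (by rw [Multiset.singleton_le]; simp) (by simp)
        simp only [Multiset.sum_singleton] at hw
        omega
      · have hle2 : ({n+3,n+1} : Multiset ℕ) ≤ ({n+3,n+1,2} : Multiset ℕ) := by
          rw [show ({n+3,n+1,2} : Multiset ℕ) = ({n+3,n+1} : Multiset ℕ) + {2} from rfl]
          exact Multiset.le_add_right _ _
        have hw := wit {n+3, n+1} hle2 (by simp)
        have hs2 : ({n+3,n+1} : Multiset ℕ).sum = 2*n+4 := by simp; omega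
        rw [hs2] at hw
        omega
      · have hteq : t = μ := Multiset.eq_of_le_of_card_le htle (by rw [htcard, hμcard])
        have hw := wit {n+3,n+1,2} le_rfl (by simp)
        have hs3 : ({n+3,n+1,2} : Multiset ℕ).sum = 2*n+6 := by simp; omega
        rw [hs3] at hw
        rw [hteq, hμsum]
        exact hw
    · rintro ⟨B, hpart, hchain, hcardB⟩
      have hB3 : Multiset.card B = 3 := by
        have h := congrArg Multiset.card hcardB
        rwa [Multiset.card_map, hμcard] at h
      obtain ⟨s1, s2, s3, rfl⟩ := Multiset.card_eq_three.mp hB3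
      have cov : ∀ x : B3nType n,
          (x ∈ s1 ∧ x ∉ s2 ∧ x ∉ s3) ∨ (x ∉ s1 ∧ x ∈ s2 ∧ x ∉ s3) ∨
          (x ∉ s1 ∧ x ∉ s2 ∧ x ∈ s3) := by
        intro x
        have h := hpart x
        simp only [Multiset.insert_eq_cons, Multiset.map_cons, Multiset.sum_cons,
          Multiset.map_singleton, Multiset.sum_singleton] at h
        by_cases h1 : x ∈ s1 <;> by_cases h2 : x ∈ s2 <;> by_cases h3 : x ∈ s3 <;>
          simp [h1, h2, h3] at h <;> tauto
      have ch1 := hchain s1 (by simp)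
      have ch2 := hchain s2 (by simp)
      have ch3 := hchain s3 (by simp)
      have hc1 : s1.card ≤ n := hμle _ (by rw [← hcardB]; simp)
      have hc2 : s2.card ≤ n := hμle _ (by rw [← hcardB]; simp)
      have hc3 : s3.card ≤ n := hμle _ (by rw [← hcardB]; simp)
      rcases cov (elE n) with ⟨he,-,-⟩ | ⟨-,he,-⟩ | ⟨-,-,he⟩ <;>
        rcases cov (elF n) with ⟨hf,-,-⟩ | ⟨-,hf,-⟩ | ⟨-,-,hf⟩
      · exact absurd (ch1 _ he _ hf) (inc_ef hn1)
      · exact b3key n hn s3 s1 s2 (fun x => by rcases cov x with h|h|h <;> tauto)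
          ch3 ch1 ch2 hc3 he hf
      · exact b3key n hn s2 s1 s3 (fun x => by rcases cov x with h|h|h <;> tauto)
          ch2 ch1 ch3 hc2 he hf
      · exact b3key n hn s3 s2 s1 (fun x => by rcases cov x with h|h|h <;> tauto)
          ch3 ch2 ch1 hc3 he hf
      · exact absurd (ch2 _ he _ hf) (inc_ef hn1)
      · exact b3key n hn s1 s2 s3 (fun x => by rcases cov x with h|h|h <;> tauto)
          ch1 ch2 ch3 hc1 he hf
      · exact b3key n hn s2 s3 s1 (fun x => by rcases cov x with h|h|h <;> tauto)
          ch2 ch3 ch1 hc2 he hf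
      · exact b3key n hn s1 s3 s2 (fun x => by rcases cov x with h|h|h <;> tauto)
          ch1 ch3 ch2 hc1 he hf
      · exact absurd (ch3 _ he _ hf) (inc_ef hn1)
end

section
/- In any chain partition of B_{3,n} (n ≥ 1) into exactly 3 chains, the chain containing the element 1 must contain all of 2, 3, ..., n, and must additionally contain b or c; hence that chain has at least n+1 elements. -/
private lemma pick1 {a1 a2 a3 b1 b2 b3 c1 c2 c3 : Prop}
    (pa : (a1 ∧ ¬a2 ∧ ¬a3) ∨ (¬a1 ∧ a2 ∧ ¬a3) ∨ (¬a1 ∧ ¬a2 ∧ a3))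
    (pb : (b1 ∧ ¬b2 ∧ ¬b3) ∨ (¬b1 ∧ b2 ∧ ¬b3) ∨ (¬b1 ∧ ¬b2 ∧ b3))
    (pc : (c1 ∧ ¬c2 ∧ ¬c3) ∨ (¬c1 ∧ c2 ∧ ¬c3) ∨ (¬c1 ∧ ¬c2 ∧ c3))
    (hb1 : ¬b1) (hc1 : ¬c1)
    (hab2 : ¬(a2 ∧ b2)) (hab3 : ¬(a3 ∧ b3)) (hac2 : ¬(a2 ∧ c2)) (hac3 : ¬(a3 ∧ c3))
    (hbc2 : ¬(b2 ∧ c2)) (hbc3 : ¬(b3 ∧ c3)) : a1 := by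
  rcases pa with ⟨h, -, -⟩ | ⟨-, h2, -⟩ | ⟨-, -, h3⟩
  · exact h
  · rcases pb with ⟨hb, -, -⟩ | ⟨-, hb2, -⟩ | ⟨-, -, hb3⟩
    · exact absurd hb hb1
    · exact absurd ⟨h2, hb2⟩ hab2
    · rcases pc with ⟨hc, -, -⟩ | ⟨-, hc2, -⟩ | ⟨-, -, hc3⟩
      · exact absurd hc hc1
      · exact absurd ⟨h2, hc2⟩ hac2
      · exact absurd ⟨hb3, hc3⟩ hbc3
  · rcases pb with ⟨hb, -, -⟩ | ⟨-, hb2, -⟩ | ⟨-, -, hb3⟩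
    · exact absurd hb hb1
    · rcases pc with ⟨hc, -, -⟩ | ⟨-, hc2, -⟩ | ⟨-, -, hc3⟩
      · exact absurd hc hc1
      · exact absurd ⟨hb2, hc2⟩ hbc2
      · exact absurd ⟨h3, hc3⟩ hac3
    · exact absurd ⟨h3, hb3⟩ hab3

private lemma pick2 {a1 a2 a3 b1 b2 b3 c1 c2 c3 : Prop}
    (pa : (a1 ∧ ¬a2 ∧ ¬a3) ∨ (¬a1 ∧ a2 ∧ ¬a3) ∨ (¬a1 ∧ ¬a2 ∧ a3))
    (pb : (b1 ∧ ¬b2 ∧ ¬b3) ∨ (¬b1 ∧ b2 ∧ ¬b3) ∨ (¬b1 ∧ ¬b2 ∧ b3))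
    (pc : (c1 ∧ ¬c2 ∧ ¬c3) ∨ (¬c1 ∧ c2 ∧ ¬c3) ∨ (¬c1 ∧ ¬c2 ∧ c3))
    (ha1 : ¬a1)
    (hab2 : ¬(a2 ∧ b2)) (hab3 : ¬(a3 ∧ b3)) (hac2 : ¬(a2 ∧ c2)) (hac3 : ¬(a3 ∧ c3))
    (hbc2 : ¬(b2 ∧ c2)) (hbc3 : ¬(b3 ∧ c3)) : b1 ∨ c1 := by
  rcases pb with ⟨hb, -, -⟩ | ⟨-, hb2, -⟩ | ⟨-, -, hb3⟩
  · exact Or.inl hb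
  · rcases pc with ⟨hc, -, -⟩ | ⟨-, hc2, -⟩ | ⟨-, -, hc3⟩
    · exact Or.inr hc
    · exact absurd ⟨hb2, hc2⟩ hbc2
    · rcases pa with ⟨ha, -, -⟩ | ⟨-, ha2, -⟩ | ⟨-, -, ha3⟩
      · exact absurd ha ha1
      · exact absurd ⟨ha2, hb2⟩ hab2
      · exact absurd ⟨ha3, hc3⟩ hac3
  · rcases pc with ⟨hc, -, -⟩ | ⟨-, hc2, -⟩ | ⟨-, -, hc3⟩
    · exact Or.inr hc
    · rcases pa with ⟨ha, -, -⟩ | ⟨-, ha2, -⟩ | ⟨-, -, ha3⟩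
      · exact absurd ha ha1
      · exact absurd ⟨ha2, hc2⟩ hac2
      · exact absurd ⟨ha3, hb3⟩ hab3
    · exact absurd ⟨hb3, hc3⟩ hbc3

private lemma exactlyOne {p q r : Prop} [Decidable p] [Decidable q] [Decidable r]
    (h : (if p then (1:ℕ) else 0) + ((if q then (1:ℕ) else 0) + (if r then (1:ℕ) else 0)) = 1) :
    (p ∧ ¬q ∧ ¬r) ∨ (¬p ∧ q ∧ ¬r) ∨ (¬p ∧ ¬q ∧ r) := by
  split_ifs at h <;> simp_all

private lemma stmt3_aux (n : ℕ) (hn : 1 ≤ n) (s1 s2 s3 : Finset (B3nType n))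
    (hchain : ∀ s ∈ ({s1, s2, s3} : Multiset (Finset (B3nType n))),
      ∀ x ∈ s, ∀ y ∈ s, x ≤ y ∨ y ≤ x)
    (hpart : ∀ x : B3nType n,
      (({s1, s2, s3} : Multiset (Finset (B3nType n))).map
        fun s => if x ∈ s then (1 : ℕ) else 0).sum = 1)
    (h1 : elUnprimed n ⟨0, hn⟩ ∈ s1) :
    (∀ i : Fin n, elUnprimed n i ∈ s1) ∧ (elB n ∈ s1 ∨ elC n ∈ s1) ∧ n + 1 ≤ s1.card := by
  have hp : ∀ x : B3nType n, (x ∈ s1 ∧ x ∉ s2 ∧ x ∉ s3) ∨ (x ∉ s1 ∧ x ∈ s2 ∧ x ∉ s3) ∨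
      (x ∉ s1 ∧ x ∉ s2 ∧ x ∈ s3) := by
    intro x
    have h := hpart x
    simp only [Multiset.insert_eq_cons, Multiset.map_cons, Multiset.map_singleton,
      Multiset.sum_cons, Multiset.sum_singleton] at h
    exact exactlyOne h
  have hc1 := hchain s1 (by simp)
  have hc2 := hchain s2 (by simp)
  have hc3 := hchain s3 (by simp)
  -- incomparabilities
  have iUE : ∀ i : Fin n, ¬ (elUnprimed n i ≤ elE n) ∧ ¬ (elE n ≤ elUnprimed n i) := by
    intro i; simp [elUnprimed, elE, Subtype.mk_le_mk, Prod.mk_le_mk, Fin.mk_le_mk]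
  have iUF : ∀ i : Fin n, ¬ (elUnprimed n i ≤ elF n) ∧ ¬ (elF n ≤ elUnprimed n i) := by
    intro i; simp [elUnprimed, elF, Subtype.mk_le_mk, Prod.mk_le_mk, Fin.mk_le_mk]; omega
  have iEF : ¬ (elE n ≤ elF n) ∧ ¬ (elF n ≤ elE n) := by
    simp [elE, elF, Subtype.mk_le_mk, Prod.mk_le_mk, Fin.mk_le_mk]; omega
  have iDU : ¬ (elD n ≤ elUnprimed n ⟨0, hn⟩) ∧ ¬ (elUnprimed n ⟨0, hn⟩ ≤ elD n) := by
    simp [elD, elUnprimed, Subtype.mk_le_mk, Prod.mk_le_mk, Fin.mk_le_mk]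
  have iBD : ¬ (elB n ≤ elD n) ∧ ¬ (elD n ≤ elB n) := by
    simp [elD, elB, Subtype.mk_le_mk, Prod.mk_le_mk, Fin.mk_le_mk]; omega
  have iCD : ¬ (elC n ≤ elD n) ∧ ¬ (elD n ≤ elC n) := by
    simp [elD, elC, Subtype.mk_le_mk, Prod.mk_le_mk, Fin.mk_le_mk]
  have iBC : ¬ (elB n ≤ elC n) ∧ ¬ (elC n ≤ elB n) := by
    simp [elC, elB, Subtype.mk_le_mk, Prod.mk_le_mk, Fin.mk_le_mk]; omega
  -- E and F are not in s1
  have hE1 : elE n ∉ s1 := fun h =>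
    (hc1 _ h1 _ h).elim (iUE ⟨0, hn⟩).1 (iUE ⟨0, hn⟩).2
  have hF1 : elF n ∉ s1 := fun h =>
    (hc1 _ h1 _ h).elim (iUF ⟨0, hn⟩).1 (iUF ⟨0, hn⟩).2
  -- key: anything incomparable to both E and F lies in s1
  have key : ∀ x : B3nType n, (¬ x ≤ elE n ∧ ¬ elE n ≤ x) → (¬ x ≤ elF n ∧ ¬ elF n ≤ x) →
      x ∈ s1 := by
    intro x hxE hxF
    exact pick1 (hp x) (hp (elE n)) (hp (elF n)) hE1 hF1
      (fun ⟨h, h'⟩ => (hc2 _ h _ h').elim hxE.1 hxE.2)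
      (fun ⟨h, h'⟩ => (hc3 _ h _ h').elim hxE.1 hxE.2)
      (fun ⟨h, h'⟩ => (hc2 _ h _ h').elim hxF.1 hxF.2)
      (fun ⟨h, h'⟩ => (hc3 _ h _ h').elim hxF.1 hxF.2)
      (fun ⟨h, h'⟩ => (hc2 _ h _ h').elim iEF.1 iEF.2)
      (fun ⟨h, h'⟩ => (hc3 _ h _ h').elim iEF.1 iEF.2)
  have hU : ∀ i : Fin n, elUnprimed n i ∈ s1 := fun i => key _ (iUE i) (iUF i)
  -- D is not in s1
  have hD1 : elD n ∉ s1 := fun h =>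
    (hc1 _ h _ h1).elim iDU.1 iDU.2
  -- B or C in s1
  have hBC : elB n ∈ s1 ∨ elC n ∈ s1 :=
    pick2 (hp (elD n)) (hp (elB n)) (hp (elC n)) hD1
      (fun ⟨h, h'⟩ => (hc2 _ h' _ h).elim iBD.1 iBD.2)
      (fun ⟨h, h'⟩ => (hc3 _ h' _ h).elim iBD.1 iBD.2)
      (fun ⟨h, h'⟩ => (hc2 _ h' _ h).elim iCD.1 iCD.2)
      (fun ⟨h, h'⟩ => (hc3 _ h' _ h).elim iCD.1 iCD.2)
      (fun ⟨h, h'⟩ => (hc2 _ h _ h').elim iBC.1 iBC.2)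
      (fun ⟨h, h'⟩ => (hc3 _ h _ h').elim iBC.1 iBC.2)
  refine ⟨hU, hBC, ?_⟩
  -- cardinality
  have hinj : Function.Injective (elUnprimed n) := by
    intro a b h
    simp only [elUnprimed, Subtype.mk_eq_mk, Prod.mk.injEq, Fin.mk_eq_mk] at h
    have ha := a.isLt; have hb := b.isLt
    ext; omega
  have himg : (Finset.image (elUnprimed n) Finset.univ).card = n := by
    rw [Finset.card_image_of_injective _ hinj, Finset.card_univ, Fintype.card_fin]
  obtain hw | hw := hBC
  · have hnot : elB n ∉ Finset.image (elUnprimed n) Finset.univ := by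
      simp [elUnprimed, elB, Subtype.ext_iff, Prod.ext_iff]
    have hsub : insert (elB n) (Finset.image (elUnprimed n) Finset.univ) ⊆ s1 := by
      intro x hx
      rcases Finset.mem_insert.mp hx with rfl | hx
      · exact hw
      · obtain ⟨i, -, rfl⟩ := Finset.mem_image.mp hx
        exact hU i
    calc n + 1 = (insert (elB n) (Finset.image (elUnprimed n) Finset.univ)).card := by
          rw [Finset.card_insert_of_notMem hnot, himg]
      _ ≤ s1.card := Finset.card_le_card hsub
  · have hnot : elC n ∉ Finset.image (elUnprimed n) Finset.univ := by
      simp only [Finset.mem_image, Finset.mem_univ, true_and, not_exists]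
      intro a h
      simp only [elUnprimed, elC, Subtype.mk_eq_mk, Prod.mk.injEq, Fin.mk_eq_mk] at h
      omega
    have hsub : insert (elC n) (Finset.image (elUnprimed n) Finset.univ) ⊆ s1 := by
      intro x hx
      rcases Finset.mem_insert.mp hx with rfl | hx
      · exact hw
      · obtain ⟨i, -, rfl⟩ := Finset.mem_image.mp hx
        exact hU i
    calc n + 1 = (insert (elC n) (Finset.image (elUnprimed n) Finset.univ)).card := by
          rw [Finset.card_insert_of_notMem hnot, himg]
      _ ≤ s1.card := Finset.card_le_card hsub

/-- In any chain partition of `B_{3,n}` (`n ≥ 1`) into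
exactly 3 chains, the chain containing the element `1` contains all of
`2, 3, ..., n` and also `b` or `c`; hence it has at least `n+1` elements. -/
theorem stmt_3 (n : ℕ) (hn : 1 ≤ n) (B : Multiset (Finset (B3nType n)))
    (hchain : ∀ s ∈ B, ∀ x ∈ s, ∀ y ∈ s, x ≤ y ∨ y ≤ x)
    (hpart : ∀ x : B3nType n, (B.map fun s => if x ∈ s then (1 : ℕ) else 0).sum = 1)
    (hcard : B.card = 3) (s : Finset (B3nType n)) (hs : s ∈ B)
    (h1 : elUnprimed n ⟨0, hn⟩ ∈ s) :
    (∀ i : Fin n, elUnprimed n i ∈ s) ∧ (elB n ∈ s ∨ elC n ∈ s) ∧ n + 1 ≤ s.card := by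
  obtain ⟨s1, s2, s3, rfl⟩ := Multiset.card_eq_three.mp hcard
  have hs' : s = s1 ∨ s = s2 ∨ s = s3 := by simpa using hs
  rcases hs' with rfl | rfl | rfl
  · exact stmt3_aux n hn s s2 s3 hchain hpart h1
  · have e : ({s1, s, s3} : Multiset (Finset (B3nType n))) = {s, s1, s3} := by
      simp only [Multiset.insert_eq_cons]
      rw [Multiset.cons_swap]
    rw [e] at hchain hpart
    exact stmt3_aux n hn s s1 s3 hchain hpart h1
  · have e : ({s1, s2, s} : Multiset (Finset (B3nType n))) = {s, s1, s2} := by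
      show s1 ::ₘ s2 ::ₘ s ::ₘ 0 = s ::ₘ s1 ::ₘ s2 ::ₘ 0
      rw [Multiset.cons_swap s2 s, Multiset.cons_swap s1 s]
    rw [e] at hchain hpart
    exact stmt3_aux n hn s s1 s2 hchain hpart h1
end

section
/- The shape ρ = (2n+k−1, 2n+k−3, ..., k+3, k−3, 2, 2) (with k ≥ 5, n ≥ 2) has exactly 6 special rim hook tabloids whose first n−1 rim hooks can be the first n−1 rows; in any special rim hook tabloid T of shape ρ whose content λ satisfies λ_i = ρ_i for i = 1,...,n−1, the remaining rim hooks fill the top three rows (of lengths k−3, 2, 2) in one of exactly 6 ways, with contents (k−1,2), (k−1,1,1), (k−2,3), (k−2,2,1), (k−3,3,1), (k−3,2,2) and heights 3, 2, 2, 1, 1, 0 respectively. -/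
/-!
Every rim hook starts in the last remaining row. A hook that climbs into the top row `x` while
rows below it remain has more than `x` cells, so the tabloids of `x :: l` whose hooks all have at
most `x` cells are exactly those of `l` followed by the single-row hook `(x, 0)`. A content that
starts with the staircase bounds every hook by its largest part, so by induction the staircase
rows are removed last, one row at a time; what remains are the six tabloids of `(k - 3, 2, 2)`,
whose hooks are all shorter than the staircase parts.
-/

/-- Result of removing from the weakly decreasing list `l` (rows of a
Ferrers diagram, largest first) the special rim hook whose lowest row is the
last row and whose topmost row is row `r` (0-indexed). -/
def srhtStep (l : List ℕ) (r : ℕ) : List ℕ :=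
  (l.take r ++ (l.drop (r + 1)).map (· - 1)).filter (fun x => x != 0)

/-- All special rim hook tabloids of the shape given by the weakly
decreasing list of row lengths, each tabloid recorded as the list of
`(size, height)` pairs of its special rim hooks, in order of removal
(always removing the hook containing the first-column cell of the
shortest remaining row). -/
def srhtsAux : ℕ → List ℕ → List (List (ℕ × ℕ))
  | 0, _ => [[]]
  | fuel + 1, l =>
      if l.length = 0 then [[]]
      else
        (List.range l.length).flatMap fun r =>
          (srhtsAux fuel (srhtStep l r)).map fun T =>
            (l.getD r 0 + (l.length - 1 - r), l.length - 1 - r) :: T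

def srhts (l : List ℕ) : List (List (ℕ × ℕ)) := srhtsAux l.length l

/-- The content of a special rim hook tabloid: its hook sizes sorted decreasingly. -/
def contList (T : List (ℕ × ℕ)) : List ℕ :=
  (((T.map Prod.fst : List ℕ) : Multiset ℕ).sort (· ≤ ·)).reverse

/-- The height of a special rim hook tabloid: the sum of the heights of its hooks. -/
def htT (T : List (ℕ × ℕ)) : ℕ := (T.map Prod.snd).sum

/-- The staircase `(2n+k-1, 2n+k-3, ..., k+3)` of `n-1` parts. -/
def stairList (n k : ℕ) : List ℕ := (List.range (n - 1)).map fun i => 2 * n + k - 2 * i - 1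

/-- The partition `ρ = (2n+k-1, 2n+k-3, ..., k+3, k-3, 2, 2)`. -/
def rhoList (n k : ℕ) : List ℕ := stairList n k ++ [k - 3, 2, 2]

/-- Sort a list of naturals decreasingly. -/
def sortD (l : List ℕ) : List ℕ := (((l : List ℕ) : Multiset ℕ).sort (· ≤ ·)).reverse

lemma sortD_eq_sort (l : List ℕ) : sortD l = (l : Multiset ℕ).sort (· ≥ ·) :=
  List.Perm.eq_of_pairwise' (r := (· ≥ ·))
    (List.pairwise_reverse.mpr (by simpa using Multiset.pairwise_sort (l : Multiset ℕ) (· ≤ ·)))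
    (Multiset.pairwise_sort _ _)
    ((List.reverse_perm _).trans (Multiset.coe_eq_coe.mp (by rw [Multiset.sort_eq, Multiset.sort_eq])))

lemma sortD_congr {l l' : List ℕ} (h : l.Perm l') : sortD l = sortD l' := by
  rw [sortD, sortD, Multiset.coe_eq_coe.mpr h]

lemma sortD_append_perm (l : List ℕ) {m m' : List ℕ} (h : m.Perm m') :
    sortD (l ++ m) = sortD (l ++ m') :=
  sortD_congr (h.append_left l)

lemma sortD_cons_of_forall_le {x : ℕ} {l : List ℕ} (h : ∀ a ∈ l, a ≤ x) :
    sortD (x :: l) = x :: sortD l := by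
  rw [sortD_eq_sort, sortD_eq_sort, ← Multiset.cons_coe, Multiset.sort_cons _ _ _ (by simpa using h)]

lemma le_of_sortD_eq_cons {l u : List ℕ} {x : ℕ} (h : sortD l = x :: u) : ∀ a ∈ l, a ≤ x := by
  have hs := Multiset.pairwise_sort (l : Multiset ℕ) (· ≥ ·)
  rw [← sortD_eq_sort, h, List.pairwise_cons] at hs
  intro a ha
  have ha' : a ∈ x :: u := by rwa [← h, sortD_eq_sort, Multiset.mem_sort, Multiset.mem_coe]
  rcases List.mem_cons.mp ha' with rfl | hu
  exacts [le_rfl, hs.1 a hu]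

lemma le_of_contList_eq_cons {T : List (ℕ × ℕ)} {x : ℕ} {u : List ℕ} (h : contList T = x :: u) :
    ∀ p ∈ T, p.1 ≤ x :=
  fun p hp => le_of_sortD_eq_cons h p.1 (List.mem_map_of_mem hp)

lemma contList_append_singleton {T : List (ℕ × ℕ)} {x y : ℕ} (h : ∀ p ∈ T, p.1 ≤ x) :
    contList (T ++ [(x, y)]) = x :: contList T := by
  have hperm : (T ++ [(x, y)]).map Prod.fst |>.Perm (x :: T.map Prod.fst) := by
    simp [List.perm_append_singleton]
  rw [contList, ← sortD, sortD_congr hperm, sortD_cons_of_forall_le (by simpa using h)]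
  rfl

lemma contList_append_zero_heights (T : List (ℕ × ℕ)) (s : List ℕ) :
    contList (T ++ s.reverse.map (·, 0)) = sortD (s ++ T.map Prod.fst) :=
  sortD_congr (by
    simpa [Function.comp_def] using List.perm_append_comm.trans ((List.reverse_perm s).append_right _))

lemma htT_append_zero_heights (T : List (ℕ × ℕ)) (s : List ℕ) :
    htT (T ++ s.reverse.map (·, 0)) = htT T := by
  simp [htT, Function.comp_def]

lemma srhtStep_length_le {l : List ℕ} {r : ℕ} (hr : r < l.length) :
    (srhtStep l r).length ≤ l.length - 1 := by
  have := List.length_filter_le (fun x => x != 0) (l.take r ++ (l.drop (r + 1)).map (· - 1))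
  simp only [List.length_append, List.length_take, List.length_map, List.length_drop] at this
  simp only [srhtStep]
  omega

lemma srhtStep_cons_succ {x : ℕ} (hx : x ≠ 0) (l : List ℕ) (r : ℕ) :
    srhtStep (x :: l) (r + 1) = x :: srhtStep l r := by
  simp [srhtStep, hx]

lemma filter_all_map_cons {α : Type*} (P : α → Bool) (a : α) (L : List (List α)) :
    (L.map (a :: ·)).filter (·.all P) = if P a then (L.filter (·.all P)).map (a :: ·) else [] := by
  cases h : P a <;> simp [List.filter_map, Function.comp_def, h]

lemma filter_all_le_srhtsAux_cons {x : ℕ} (hx : x ≠ 0) (fuel : ℕ) (l : List ℕ)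
    (hl : l.length ≤ fuel) :
    (srhtsAux (fuel + 1) (x :: l)).filter (·.all (·.1 ≤ x)) =
      ((srhtsAux fuel l).filter (·.all (·.1 ≤ x))).map (· ++ [(x, 0)]) := by
  induction fuel generalizing l with
  | zero =>
    obtain rfl : l = [] := List.length_eq_zero_iff.mp (by omega)
    simp [srhtsAux, List.filter]
  | succ fuel ih =>
    rcases l with _ | ⟨b, l'⟩
    · simp [srhtsAux, srhtStep, List.filter]
    set l := b :: l'
    rw [srhtsAux, if_neg (by simp), List.length_cons, List.range_succ_eq_map, List.flatMap_cons,
      List.filter_append, filter_all_map_cons, if_neg (by simp [l]), List.nil_append,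
      srhtsAux, if_neg (by simp [l])]
    simp only [List.filter_flatMap, List.map_flatMap, List.flatMap_map]
    refine List.flatMap_congr fun r hr => ?_
    rw [List.mem_range] at hr
    have hrow : l.length + 1 - 1 - (r + 1) = l.length - 1 - r := by omega
    rw [srhtStep_cons_succ hx, filter_all_map_cons, filter_all_map_cons,
      ih _ (by have := srhtStep_length_le hr; omega), Nat.succ_eq_add_one, List.getD_cons_succ, hrow]
    split_ifs <;> simp [List.map_map, Function.comp_def]

theorem filter_srhts_append (b : List ℕ) {s : List ℕ} (hs : s.Pairwise (· ≥ ·))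
    (hpos : ∀ a ∈ s, 0 < a) (hb : ∀ T ∈ srhts b, ∀ p ∈ T, ∀ a ∈ s, p.1 ≤ a) :
    (srhts (s ++ b)).filter (fun T => (contList T).take s.length = s) =
      (srhts b).map (· ++ s.reverse.map (·, 0)) := by
  induction s with
  | nil => simp
  | cons x s ih =>
    rw [List.pairwise_cons] at hs
    have ih := ih hs.2 (fun a ha => hpos a (by simp [ha]))
      (fun T hT p hp a ha => hb T hT p hp a (by simp [ha]))
    have hfirst : ∀ T : List (ℕ × ℕ), (contList T).take (s.length + 1) = x :: s →
        T.all (·.1 ≤ x) := by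
      intro T hT
      obtain ⟨u, hu⟩ : ∃ u, contList T = x :: u := by
        rcases hc : contList T with _ | ⟨c, u⟩ <;> simp_all
      simpa using le_of_contList_eq_cons hu
    have hrest : ∀ T : List (ℕ × ℕ), T.all (·.1 ≤ x) →
        ((contList (T ++ [(x, 0)])).take (s.length + 1) = x :: s ↔ (contList T).take s.length = s) := by
      intro T hT
      rw [contList_append_singleton (by simpa using hT)]
      simp
    have hsmall : ∀ T ∈ (srhts b).map (· ++ s.reverse.map (·, 0)), T.all (·.1 ≤ x) := by
      simp only [List.mem_map, List.all_eq_true]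
      rintro _ ⟨T, hT, rfl⟩ p hp
      simp only [List.mem_append, List.mem_map, List.mem_reverse] at hp
      rcases hp with hp | ⟨a, ha, rfl⟩
      · exact decide_eq_true (hb T hT p hp x (by simp))
      · exact decide_eq_true (hs.1 a ha)
    calc (srhts ((x :: s) ++ b)).filter (fun T => (contList T).take (x :: s).length = x :: s)
        = ((srhts ((x :: s) ++ b)).filter (·.all (·.1 ≤ x))).filter
            (fun T => (contList T).take (s.length + 1) = x :: s) := by
          rw [List.filter_filter]
          refine List.filter_congr fun T _ => ?_
          by_cases h : (contList T).take (s.length + 1) = x :: s <;> simp [h, hfirst T]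
      _ = (((srhts (s ++ b)).filter (·.all (·.1 ≤ x))).map (· ++ [(x, 0)])).filter
            (fun T => (contList T).take (s.length + 1) = x :: s) := by
          rw [srhts, List.cons_append, List.length_cons,
            filter_all_le_srhtsAux_cons (hpos x (by simp)).ne' _ _ le_rfl]
          rfl
      _ = (((srhts (s ++ b)).filter (fun T => (contList T).take s.length = s)).filter
            (·.all (·.1 ≤ x))).map (· ++ [(x, 0)]) := by
          rw [List.filter_map, List.filter_filter, List.filter_filter]
          congr 1
          refine List.filter_congr fun T _ => ?_
          by_cases h : T.all (·.1 ≤ x) <;> simp [h, hrest T]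
      _ = (srhts b).map (· ++ (x :: s).reverse.map (·, 0)) := by
          rw [ih, List.filter_eq_self.mpr hsmall, List.map_map]
          simp [Function.comp_def]

lemma srhts_three_rows {k : ℕ} (hk : 5 ≤ k) :
    srhts [k - 3, 2, 2] =
      [[(k - 1, 2), (2, 1)], [(k - 1, 2), (1, 0), (1, 0)], [(3, 1), (k - 2, 1)],
       [(3, 1), (1, 0), (k - 3, 0)], [(2, 0), (k - 2, 1), (1, 0)], [(2, 0), (2, 0), (k - 3, 0)]] := by
  obtain ⟨a, rfl⟩ : ∃ a, k = a + 5 := ⟨k - 5, by omega⟩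
  simp [srhts, srhtsAux, srhtStep, List.range_succ]

lemma fst_le_of_mem_srhts_three_rows {k : ℕ} (hk : 5 ≤ k) :
    ∀ T ∈ srhts [k - 3, 2, 2], ∀ p ∈ T, p.1 ≤ k - 1 := by
  rw [srhts_three_rows hk]
  simp only [List.forall_mem_cons, List.not_mem_nil, IsEmpty.forall_iff, implies_true, and_true]
  omega

lemma stairList_pairwise (n k : ℕ) : (stairList n k).Pairwise (· ≥ ·) := by
  rw [stairList, List.pairwise_map, List.pairwise_iff_getElem]
  simp only [List.getElem_range, List.length_range]
  omega

lemma add_three_le_of_mem_stairList {n k a : ℕ} (ha : a ∈ stairList n k) : k + 3 ≤ a := by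
  simp only [stairList, List.mem_map, List.mem_range] at ha
  omega

theorem stmt_14_general (n k : ℕ) (hk : 5 ≤ k) :
    ((srhts (rhoList n k)).filter fun T =>
        decide ((contList T).take (n - 1) = stairList n k)).length = 6 ∧
    (((srhts (rhoList n k)).filter fun T =>
        decide ((contList T).take (n - 1) = stairList n k)).map
          (fun T => (contList T, htT T)) : Multiset (List ℕ × ℕ)) =
      {(sortD (stairList n k ++ [k - 1, 2]), 3),
       (sortD (stairList n k ++ [k - 1, 1, 1]), 2),
       (sortD (stairList n k ++ [k - 2, 3]), 2),
       (sortD (stairList n k ++ [k - 2, 2, 1]), 1),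
       (sortD (stairList n k ++ [k - 3, 3, 1]), 1),
       (sortD (stairList n k ++ [k - 3, 2, 2]), 0)} := by
  have hlen : n - 1 = (stairList n k).length := by simp [stairList]
  have hfilter := filter_srhts_append [k - 3, 2, 2] (stairList_pairwise n k)
    (fun a ha => by have := add_three_le_of_mem_stairList ha; omega)
    (fun T hT p hp a ha => by
      have := fst_le_of_mem_srhts_three_rows hk T hT p hp
      have := add_three_le_of_mem_stairList ha
      omega)
  have hperm₁ : [3, 1, k - 3].Perm [k - 3, 3, 1] := List.perm_append_singleton (k - 3) [3, 1]
  have hperm₂ : [2, 2, k - 3].Perm [k - 3, 2, 2] := List.perm_append_singleton (k - 3) [2, 2]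
  rw [rhoList, hlen, hfilter, srhts_three_rows hk]
  refine ⟨rfl, ?_⟩
  simp only [List.map_cons, List.map_nil, contList_append_zero_heights, htT_append_zero_heights,
    sortD_append_perm _ (List.Perm.swap (k - 2) 3 []),
    sortD_append_perm _ hperm₁, sortD_append_perm _ (List.Perm.swap (k - 2) 2 [1]),
    sortD_append_perm _ hperm₂]
  simp only [htT, List.map_cons, List.map_nil, List.sum_cons, List.sum_nil]
  exact (Multiset.coe_eq_coe.mpr (((List.Perm.swap _ _ _).cons _).cons _ |>.cons _)).trans rfl

/-- For `k ≥ 5`, `n ≥ 2` and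
`ρ = (2n+k-1, ..., k+3, k-3, 2, 2)`, there are exactly 6 special rim hook
tabloids of shape `ρ` whose content agrees with `ρ` in its first `n-1`
parts; their contents complete the staircase by
`(k-1,2), (k-1,1,1), (k-2,3), (k-2,2,1), (k-3,3,1), (k-3,2,2)` and their
heights are `3, 2, 2, 1, 1, 0` respectively. -/
theorem stmt_14 (n k : ℕ) (hn : 2 ≤ n) (hk : 5 ≤ k) :
    ((srhts (rhoList n k)).filter fun T =>
        decide ((contList T).take (n - 1) = stairList n k)).length = 6 ∧
    (((srhts (rhoList n k)).filter fun T =>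
        decide ((contList T).take (n - 1) = stairList n k)).map
          (fun T => (contList T, htT T)) : Multiset (List ℕ × ℕ)) =
      {(sortD (stairList n k ++ [k - 1, 2]), 3),
       (sortD (stairList n k ++ [k - 1, 1, 1]), 2),
       (sortD (stairList n k ++ [k - 2, 3]), 2),
       (sortD (stairList n k ++ [k - 2, 2, 1]), 1),
       (sortD (stairList n k ++ [k - 3, 3, 1]), 1),
       (sortD (stairList n k ++ [k - 3, 2, 2]), 0)} :=
  stmt_14_general n k hk
end

section
/- Let T be a special rim hook tabloid of shape ρ = (2n+k−1, 2n+k−3, ..., k+3, k−3, 2, 2) with content λ such that the product of chains (n+k) × n admits a chain partition of type λ. Then λ_i = ρ_i = 2n+k−2i+1 for all 1 ≤ i ≤ n−1. -/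
open Finset

theorem Multiset.exists_le_map_eq_of_le_map {α β : Type*} {f : α → β} {s : Multiset β}
    {t : Multiset α} (h : s ≤ t.map f) : ∃ u ≤ t, u.map f = s := by
  induction s using Quotient.inductionOn
  induction t using Quotient.inductionOn
  obtain ⟨l, hperm, hsub⟩ := Multiset.coe_le.mp h
  obtain ⟨l', hl', rfl⟩ := List.sublist_map_iff.mp hsub
  exact ⟨l', hl'.subperm, Multiset.coe_eq_coe.mpr hperm⟩

theorem List.sum_le_sum_take_of_pairwise_ge {L : List ℕ} (hL : L.Pairwise (· ≥ ·))
    {s : Multiset ℕ} (hs : s ≤ L) {j : ℕ} (hj : Multiset.card s ≤ j) :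
    s.sum ≤ (L.take j).sum := by
  induction L generalizing s j with
  | nil => simp [Multiset.le_zero.mp hs]
  | cons a t ih =>
    obtain ⟨hat, ht⟩ := List.pairwise_cons.mp hL
    cases j with
    | zero => simp [Multiset.card_eq_zero.mp (Nat.le_zero.mp hj)]
    | succ j =>
      rw [List.take_succ_cons, List.sum_cons]
      by_cases has : a ∈ s
      · obtain ⟨s, rfl⟩ := Multiset.exists_cons_of_mem has
        rw [← Multiset.cons_coe, Multiset.cons_le_cons_iff] at hs
        rw [Multiset.sum_cons]
        rw [Multiset.card_cons] at hj
        exact Nat.add_le_add_left (ih ht hs (by omega)) a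
      · rw [← Multiset.cons_coe, Multiset.le_cons_of_notMem has] at hs
        refine (ih ht hs hj).trans ?_
        rcases lt_or_ge j t.length with hjt | hjt
        · rw [List.sum_take_succ _ _ hjt]
          have := hat _ (List.getElem_mem hjt)
          omega
        · rw [List.take_of_length_le hjt, List.take_of_length_le (by omega)]
          omega

theorem List.sum_take_le_sum_take_filter_ne_zero (L : List ℕ) (j : ℕ) :
    (L.take j).sum ≤ ((L.filter (· != 0)).take j).sum := by
  induction L generalizing j with
  | nil => simp
  | cons a t ih =>
    cases j with
    | zero => simp
    | succ j =>
      by_cases ha : a = 0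
      · subst ha
        simpa using (List.monotone_sum_take t (Nat.le_succ j)).trans (ih (j + 1))
      · simpa [List.filter_cons, ha] using ih j

theorem List.take_length_eq_of_sum_take_eq {L L' : List ℕ} (h0 : 0 ∉ L')
    (h : ∀ j ≤ L'.length, (L.take j).sum = (L'.take j).sum) : L.take L'.length = L' := by
  induction L' generalizing L with
  | nil => simp
  | cons b u ih =>
    have h1 := h 1 (by simp)
    cases L with
    | nil => exact (h0 (List.mem_cons.mpr (Or.inl (by simpa using h1)))).elim
    | cons a t =>
      obtain rfl : a = b := by simpa using h1
      have hu : ∀ j ≤ u.length, (t.take j).sum = (u.take j).sum := fun j hj => by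
        simpa using h (j + 1) (by simpa using hj)
      simp [ih (fun hu => h0 (List.mem_cons_of_mem _ hu)) hu]

theorem sum_range_min_min_le (N j : ℕ) :
    ∑ t ∈ range (N - 1), min j (min (t + 1) (N - 1 - t)) ≤ ∑ i ∈ range j, (N - 1 - 2 * i) := by
  have hmin : ∀ m, min j m = ∑ i ∈ range j, if i < m then 1 else 0 := fun m => by
    rw [sum_boole, Nat.cast_id, ← card_range (min j m)]
    congr 1
    ext i
    simp
  simp_rw [hmin]
  rw [sum_comm]
  gcongr with i
  rw [sum_boole, Nat.cast_id]
  calc #{t ∈ range (N - 1) | i < min (t + 1) (N - 1 - t)} ≤ #(Ico i (N - 1 - i)) :=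
        card_le_card fun t ht => by
          simp only [mem_filter, mem_range, mem_Ico, lt_min_iff] at ht ⊢
          omega
    _ = N - 1 - 2 * i := by rw [Nat.card_Ico]; omega

section Chains

variable {V : Type*} [DecidableEq V]

theorem IsPartitionM.sum_card_filter_le [Fintype V] {B B' : Multiset (Finset V)}
    (hB : IsPartitionM B) (hB' : B' ≤ B) (p : V → Prop) [DecidablePred p] :
    (B'.map fun s => #(s.filter p)).sum ≤ #(univ.filter p) := by
  have hcard : ∀ s : Finset V, #(s.filter p) = ∑ x ∈ univ.filter p, if x ∈ s then 1 else 0 :=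
    fun s => by
      rw [sum_boole, Nat.cast_id]
      congr 1
      ext x
      simp [and_comm]
  obtain ⟨C, rfl⟩ := Multiset.le_iff_exists_add.mp hB'
  simp_rw [hcard]
  rw [Multiset.sum_map_sum]
  calc _ ≤ ∑ _x ∈ univ.filter p, 1 := sum_le_sum fun x _ => by
          have := hB x
          rw [Multiset.map_add, Multiset.sum_add] at this
          omega
    _ = _ := by simp

theorem IsChain.card_filter_eq_le_one [PartialOrder V] {f : V → ℕ} (hf : StrictMono f)
    {s : Finset V} (hs : IsChain (· ≤ ·) (s : Set V)) (t : ℕ) : #(s.filter (f · = t)) ≤ 1 := by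
  refine card_le_one.mpr fun x hx y hy => ?_
  simp only [mem_filter] at hx hy
  by_contra hxy
  rcases hs hx.1 hy.1 hxy with hle | hle
  · exact (hf (hle.lt_of_ne hxy)).ne (hx.2.trans hy.2.symm)
  · exact (hf (hle.lt_of_ne (Ne.symm hxy))).ne (hy.2.trans hx.2.symm)

end Chains

theorem card_filter_val_add_val_eq_le (a b t : ℕ) :
    #(univ.filter fun p : Fin a × Fin b => (p.1 : ℕ) + p.2 = t) ≤ min (t + 1) (a + b - 1 - t) := by
  calc _ ≤ #(Ico (t + 1 - b) (min (t + 1) a)) := by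
        refine card_le_card_of_injOn (fun p => (p.1 : ℕ)) (fun p hp => ?_) fun p hp q hq hpq => ?_
        · simp only [coe_filter, mem_univ, true_and, Set.mem_ofPred_eq] at hp
          simp only [coe_Ico, Set.mem_Ico]
          omega
        · simp only [coe_filter, mem_univ, true_and, Set.mem_ofPred_eq] at hp hq
          exact Prod.ext (Fin.ext hpq) (Fin.ext (by simp only at hpq; omega))
    _ ≤ _ := by rw [Nat.card_Ico]; omega

theorem strictMono_val_add_val (a b : ℕ) : StrictMono fun p : Fin a × Fin b => (p.1 : ℕ) + p.2 :=
  fun p q hpq => by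
    show (p.1 : ℕ) + p.2 < q.1 + q.2
    rcases Prod.lt_iff.mp hpq with ⟨h1, h2⟩ | ⟨h1, h2⟩ <;>
      simp only [Fin.lt_def, Fin.le_def] at h1 h2 <;> omega

theorem sum_card_le_of_isPartitionM {a b j : ℕ} {B B' : Multiset (Finset (Fin a × Fin b))}
    (hB : IsPartitionM B) (hB' : B' ≤ B)
    (hchain : ∀ s ∈ B', IsChain (· ≤ ·) (s : Set (Fin a × Fin b)))
    (hj : Multiset.card B' ≤ j) :
    (B'.map Finset.card).sum ≤ ∑ i ∈ range j, (a + b - 1 - 2 * i) := by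
  let rank : Fin a × Fin b → ℕ := fun p => p.1 + p.2
  have hrank : ∀ s : Finset (Fin a × Fin b),
      #s = ∑ t ∈ range (a + b - 1), #(s.filter (rank · = t)) :=
    fun s => card_eq_sum_card_fiberwise fun p _ => by
      simp only [rank, coe_range, Set.mem_Iio]
      omega
  calc (B'.map Finset.card).sum
      = ∑ t ∈ range (a + b - 1), (B'.map fun s => #(s.filter (rank · = t))).sum := by
        rw [Multiset.map_congr rfl fun s _ => hrank s, Multiset.sum_map_sum]
    _ ≤ ∑ t ∈ range (a + b - 1), min j (min (t + 1) (a + b - 1 - t)) := by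
        gcongr with t
        refine le_min ?_ ((hB.sum_card_filter_le hB' _).trans (card_filter_val_add_val_eq_le a b t))
        refine (Multiset.sum_le_card_nsmul _ 1 ?_).trans (by simpa using hj)
        simp only [Multiset.mem_map]
        rintro _ ⟨s, hs, rfl⟩
        exact (hchain s hs).card_filter_eq_le_one (strictMono_val_add_val a b) t
    _ ≤ _ := sum_range_min_min_le (a + b) j

theorem sum_take_le_hook_add_sum_take {l : List ℕ} {r j : ℕ} (hr : r < l.length) (hrj : r < j) :
    (l.take j).sum ≤ (l.getD r 0 + (l.length - 1 - r)) +
      ((l.take r ++ (l.drop (r + 1)).map (· - 1)).take (j - 1)).sum := by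
  obtain ⟨q, rfl⟩ : ∃ q, j = r + 1 + q := ⟨j - r - 1, by omega⟩
  have hr' : (l.take r).length = r := by rw [List.length_take]; omega
  rw [List.take_add, List.take_add_one, List.getElem?_eq_getElem hr,
    show r + 1 + q - 1 = r + q by omega, List.take_add, List.take_left' hr', List.drop_left' hr',
    ← List.map_take, List.getD_eq_getElem _ _ hr]
  have hcells : ∀ E : List ℕ, E.sum ≤ E.length + (E.map (· - 1)).sum := fun E => by
    induction E with
    | nil => simp
    | cons x E ih => simp only [List.sum_cons, List.length_cons, List.map_cons]; omega
  have hrows : ((l.drop (r + 1)).take q).length ≤ l.length - 1 - r := by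
    simp only [List.length_take, List.length_drop]; omega
  have := hcells ((l.drop (r + 1)).take q)
  simp only [List.sum_append, Option.toList_some, List.sum_cons, List.sum_nil]
  omega

theorem exists_le_sum_take_le_of_mem_srhtsAux {fuel : ℕ} {l : List ℕ} (hl : l.length ≤ fuel)
    {T : List (ℕ × ℕ)} (hT : T ∈ srhtsAux fuel l) (j : ℕ) :
    ∃ s ≤ ((T.map Prod.fst : List ℕ) : Multiset ℕ),
      Multiset.card s ≤ j ∧ (l.take j).sum ≤ s.sum := by
  induction fuel generalizing l T j with
  | zero =>
    obtain rfl : l = [] := List.eq_nil_of_length_eq_zero (by omega)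
    exact ⟨0, Multiset.zero_le _, by simp, by simp⟩
  | succ fuel ih =>
    rw [srhtsAux] at hT
    split_ifs at hT with hl0
    · obtain rfl := List.eq_nil_of_length_eq_zero hl0
      exact ⟨0, Multiset.zero_le _, by simp, by simp⟩
    simp only [List.mem_flatMap, List.mem_range, List.mem_map] at hT
    obtain ⟨r, hr, T, hT, rfl⟩ := hT
    have hstep : (srhtStep l r).length ≤ fuel :=
      (List.length_filter_le _ _).trans (by
        simp only [List.length_append, List.length_take, List.length_drop, List.length_map]
        omega)
    have hfilter :=
      List.sum_take_le_sum_take_filter_ne_zero (l.take r ++ (l.drop (r + 1)).map (· - 1))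
    rcases le_or_gt j r with hjr | hrj
    · obtain ⟨s, hs, hcard, hsum⟩ := ih hstep hT j
      refine ⟨s, hs.trans (Multiset.le_cons_self _ _), hcard, ?_⟩
      calc (l.take j).sum = ((l.take r ++ (l.drop (r + 1)).map (· - 1)).take j).sum := by
            rw [List.take_append_of_le_length (by rw [List.length_take]; omega), List.take_take,
              min_eq_left hjr]
        _ ≤ _ := hfilter j
        _ ≤ _ := hsum
    · obtain ⟨s, hs, hcard, hsum⟩ := ih hstep hT (j - 1)
      refine ⟨_ ::ₘ s, Multiset.cons_le_cons _ hs, by rw [Multiset.card_cons]; omega, ?_⟩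
      rw [Multiset.sum_cons]
      exact (sum_take_le_hook_add_sum_take hr hrj).trans
        (Nat.add_le_add_left ((hfilter (j - 1)).trans hsum) _)

theorem coe_contList (T : List (ℕ × ℕ)) :
    ((contList T : List ℕ) : Multiset ℕ) = ((T.map Prod.fst : List ℕ) : Multiset ℕ) := by
  rw [contList, Multiset.coe_reverse, Multiset.sort_eq]

theorem pairwise_contList (T : List (ℕ × ℕ)) : (contList T).Pairwise (· ≥ ·) := by
  rw [contList, List.pairwise_reverse]
  exact Multiset.pairwise_sort _ _

theorem sum_take_le_sum_take_contList {l : List ℕ} {T : List (ℕ × ℕ)} (hT : T ∈ srhts l)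
    (j : ℕ) : (l.take j).sum ≤ ((contList T).take j).sum := by
  obtain ⟨s, hs, hcard, hsum⟩ := exists_le_sum_take_le_of_mem_srhtsAux le_rfl hT j
  exact hsum.trans
    (List.sum_le_sum_take_of_pairwise_ge (pairwise_contList T) (by rwa [coe_contList]) hcard)

theorem sum_take_le_of_hasChainPartitionOfType {a b : ℕ} {L : List ℕ}
    (h : HasChainPartitionOfType (Fin a × Fin b) L) (j : ℕ) :
    (L.take j).sum ≤ ∑ i ∈ range j, (a + b - 1 - 2 * i) := by
  obtain ⟨B, hB, hchain, hL⟩ := h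
  obtain ⟨B', hB', hmap⟩ := Multiset.exists_le_map_eq_of_le_map (f := Finset.card)
    (s := (L.take j : List ℕ)) (hL ▸ Multiset.coe_le.mpr (List.take_sublist j L).subperm)
  have hcard : Multiset.card B' ≤ j := by
    have := congrArg Multiset.card hmap
    simp only [Multiset.card_map, Multiset.coe_card, List.length_take] at this
    omega
  have := sum_card_le_of_isPartitionM hB hB'
    (fun s hs x hx y hy _ => hchain s (Multiset.mem_of_le hB' hs) x hx y hy) hcard
  rwa [hmap, Multiset.sum_coe] at this

theorem length_stairList (n k : ℕ) : (stairList n k).length = n - 1 := by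
  simp [stairList]

theorem zero_notMem_stairList (n k : ℕ) : 0 ∉ stairList n k := by
  simp only [stairList, List.mem_map, List.mem_range, not_exists, not_and]
  omega

theorem take_rhoList {n k j : ℕ} (hj : j ≤ n - 1) :
    (rhoList n k).take j = (stairList n k).take j :=
  List.take_append_of_le_length (by rwa [length_stairList])

theorem sum_take_stairList {n k j : ℕ} (hj : j ≤ n - 1) :
    ((stairList n k).take j).sum = ∑ i ∈ range j, (n + k + n - 1 - 2 * i) := by
  rw [stairList, ← List.map_take, List.take_range, min_eq_left hj, sum_eq_multiset_sum,
    range_val, Multiset.range, Multiset.map_coe, Multiset.sum_coe]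
  congr 1
  exact List.map_congr_left fun i _ => by omega

theorem stmt_15_general (n k : ℕ)
    (T : List (ℕ × ℕ)) (hT : T ∈ srhts (rhoList n k))
    (h : HasChainPartitionOfType (Fin (n + k) × Fin n)
      ((T.map Prod.fst : List ℕ) : Multiset ℕ)) :
    (contList T).take (n - 1) = stairList n k := by
  rw [← coe_contList] at h
  rw [← length_stairList n k]
  refine List.take_length_eq_of_sum_take_eq (zero_notMem_stairList n k) fun j hj => ?_
  rw [length_stairList] at hj
  refine le_antisymm ?_ ?_
  · rw [sum_take_stairList hj]
    exact sum_take_le_of_hasChainPartitionOfType h j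
  · rw [← take_rhoList hj]
    exact sum_take_le_sum_take_contList hT j

/-- If `T` is a special rim hook tabloid of shape
`ρ = (2n+k-1, ..., k+3, k-3, 2, 2)` whose content `λ` is the type of some
chain partition of the product of chains `(n+k) × n`, then the first `n-1`
parts of `λ` agree with those of `ρ`. -/
theorem stmt_15 (n k : ℕ) (hn : 1 ≤ n) (hk : 5 ≤ k)
    (T : List (ℕ × ℕ)) (hT : T ∈ srhts (rhoList n k))
    (h : HasChainPartitionOfType (Fin (n + k) × Fin n)
      ((T.map Prod.fst : List ℕ) : Multiset ℕ)) :
    (contList T).take (n - 1) = stairList n k :=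
  stmt_15_general n k T hT h
end
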